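/- arXiv:1305.0674 — 2 statements merged into one kernel-verified Lean document; each statement's English description precedes it below -/
import Mathlib

section
/- Under greedy parsing with a fixed dictionary D, if s = p_0|...|p_{k-1} and t = q_0|...|q_{ℓ-1} are greedy parsings, p_0...p_{y-1} is a prefix of t, and the longest common prefix of s and t extends exactly r characters into phrase p_y (with r < |p_y|), then the first r characters of p_y equal the first r characters of q_y. -/
/-- A set of strings is prefix-closed. -/
def PrefixClosed {α : Type*} (D : Set (List α)) : Prop :=
  ∀ p ∈ D, ∀ q : List α, q <+: p → q ∈ D

/-- `p` is a longest element of `D` that is a prefix of `s`. -/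
def IsLongestPrefIn {α : Type*} (D : Set (List α)) (s p : List α) : Prop :=
  p ∈ D ∧ p <+: s ∧ ∀ q ∈ D, q <+: s → q.length ≤ p.length

/-- `GreedyParse D s ps` holds iff `ps` is the greedy parsing of `s` with
respect to the fixed dictionary `D`: each phrase is the longest element of `D`
that is a prefix of the remaining string, and the phrases concatenate to `s`. -/
inductive GreedyParse {α : Type*} (D : Set (List α)) : List α → List (List α) → Prop
  | nil : GreedyParse D [] []
  | cons {s p : List α} {ps : List (List α)} :
      p ≠ [] → IsLongestPrefIn D s p → GreedyParse D (s.drop p.length) ps →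
      GreedyParse D s (p :: ps)

/-- The longest common prefix of two strings. -/
def lcp {α : Type*} [DecidableEq α] : List α → List α → List α
  | a :: s, b :: t => if a = b then a :: lcp s t else []
  | _, _ => []

lemma lcp_prefix {α : Type*} [DecidableEq α] :
    ∀ s t : List α, lcp s t <+: s ∧ lcp s t <+: t
  | a :: s, b :: t => by
    simp only [lcp]
    split
    · next h =>
      subst h
      obtain ⟨h1, h2⟩ := lcp_prefix s t
      exact ⟨by rw [List.cons_prefix_cons]; exact ⟨rfl, h1⟩,
             by rw [List.cons_prefix_cons]; exact ⟨rfl, h2⟩⟩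
    · exact ⟨List.nil_prefix, List.nil_prefix⟩
  | [], t => by simp [lcp]
  | a :: s, [] => by simp [lcp]

lemma prefix_take_eq {α : Type*} {p s : List α} (h : p <+: s) {n : ℕ}
    (hn : n ≤ p.length) : p.take n = s.take n := by
  obtain ⟨u, rfl⟩ := h
  rw [List.take_append_of_le_length hn]

lemma take_eq_of_take_eq {α : Type*} {s t : List α} {n m : ℕ}
    (h : s.take n = t.take n) (hmn : m ≤ n) : s.take m = t.take m := by
  have h1 : (s.take n).take m = (t.take n).take m := by rw [h]
  rwa [List.take_take, List.take_take, min_eq_left hmn] at h1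

lemma prefix_eq_take {α : Type*} {p s : List α} (h : p <+: s) :
    p = s.take p.length := by
  have := prefix_take_eq h (le_refl p.length)
  simpa using this

/-- The greedy phrase is determined by a sufficiently long common prefix. -/
lemma phrase_eq {α : Type*} (D : Set (List α)) (hpc : PrefixClosed D)
    {s t p q : List α} (hp : IsLongestPrefIn D s p) (hq : IsLongestPrefIn D t q)
    {n : ℕ} (hn : p.length < n) (hst : s.take n = t.take n) : q = p := by
  obtain ⟨hpD, hps, hpmax⟩ := hp
  obtain ⟨hqD, hqt, hqmax⟩ := hq
  have hqp : q.length ≤ p.length := by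
    by_contra hlt
    push_neg at hlt
    set m := p.length + 1 with hm
    have hmq : m ≤ q.length := hlt
    have hmn : m ≤ n := hn
    have h1 : q.take m ∈ D := hpc q hqD _ (q.take_prefix m)
    have h2 : q.take m = t.take m := prefix_take_eq hqt hmq
    have h3 : q.take m = s.take m := by
      rw [h2]; exact (take_eq_of_take_eq hst hmn).symm
    have h4 : q.take m <+: s := h3 ▸ s.take_prefix m
    have h5 := hpmax _ h1 h4
    rw [List.length_take] at h5
    omega
  have hpt : p <+: t := by
    have h1 : p = s.take p.length := prefix_eq_take hps
    have h2 : s.take p.length = t.take p.length := take_eq_of_take_eq hst (le_of_lt hn)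
    rw [h1, h2]; exact t.take_prefix _
  have hpq : p.length ≤ q.length := hqmax _ hpD hpt
  have hlen : q.length = p.length := le_antisymm hqp hpq
  rw [prefix_eq_take hqt, hlen, ← prefix_eq_take hpt]

lemma greedy_core {α : Type*} [DecidableEq α] (D : Set (List α)) (hpc : PrefixClosed D) :
    ∀ (y : ℕ) (s t : List α) (ps qs : List (List α)),
      GreedyParse D s ps → GreedyParse D t qs →
      ∀ r : ℕ, y < ps.length → y < qs.length → 0 < r →
        r ≤ (ps.getD y []).length →
        s.take ((ps.take y).flatten.length + r) = t.take ((ps.take y).flatten.length + r) →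
        (ps.getD y []).take r = (qs.getD y []).take r := by
  intro y
  induction y with
  | zero =>
    intro s t ps qs hs ht r hy1 hy2 hr0 hrle hst
    cases hs with
    | nil => simp at hy1
    | cons hpne hp hs' =>
      cases ht with
      | nil => simp at hy2
      | cons hqne hq ht' =>
        rename_i p ps' q qs'
        simp only [List.take_zero, List.flatten_nil, List.length_nil, Nat.zero_add] at hst
        simp only [List.getD_cons_zero] at hrle ⊢
        have h1 : p.take r = s.take r := prefix_take_eq hp.2.1 hrle
        have h2 : r ≤ q.length := by
          have hmem : p.take r ∈ D := hpc p hp.1 _ (p.take_prefix r)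
          have hpre : p.take r <+: t := by rw [h1, hst]; exact t.take_prefix r
          have := hq.2.2 _ hmem hpre
          rw [List.length_take] at this
          omega
        have h3 : q.take r = t.take r := prefix_take_eq hq.2.1 h2
        rw [h1, h3, hst]
  | succ y ih =>
    intro s t ps qs hs ht r hy1 hy2 hr0 hrle hst
    cases hs with
    | nil => simp at hy1
    | cons hpne hp hs' =>
      cases ht with
      | nil => simp at hy2
      | cons hqne hq ht' =>
        rename_i p ps' q qs'
        simp only [List.take_succ_cons, List.flatten_cons, List.length_append] at hst
        simp only [List.getD_cons_succ] at hrle ⊢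
        set m := (ps'.take y).flatten.length with hm
        have hst' : s.take (p.length + (m + r)) = t.take (p.length + (m + r)) := by
          rw [show p.length + (m + r) = p.length + m + r by omega]; exact hst
        have hqp : q = p := phrase_eq D hpc hp hq (by omega) hst'
        subst hqp
        have hdrop : (s.drop q.length).take (m + r) = (t.drop q.length).take (m + r) := by
          rw [List.take_drop, List.take_drop, hst']
        simp only [List.length_cons] at hy1 hy2
        exact ih _ _ _ _ hs' ht' r (by omega) (by omega) hr0 hrle hdrop

/-- If `s = p_0|...|p_{k-1}` and `t = q_0|...|q_{l-1}` are greedy parsings with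
respect to the same dictionary `D`, the concatenation `p_0...p_{y-1}` is a
prefix of `t`, and the longest common prefix of `s` and `t` extends exactly
`r < |p_y|` characters into the phrase `p_y`, then the first `r` characters of
`p_y` equal the first `r` characters of `q_y`. -/
theorem greedyParse_lcp_phrase_agree {α : Type*} [DecidableEq α] (D : Set (List α))
    (hfin : D.Finite) (hpc : PrefixClosed D) (hnil : ([] : List α) ∈ D)
    (hsingle : ∀ a : α, [a] ∈ D)
    (s t : List α) (ps qs : List (List α))
    (hs : GreedyParse D s ps) (ht : GreedyParse D t qs)
    (y : ℕ) (hy1 : y < ps.length) (hy2 : y < qs.length)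
    (hpre : (ps.take y).flatten <+: t)
    (r : ℕ) (hr : (lcp s t).length = (ps.take y).flatten.length + r)
    (hrlt : r < (ps.getD y []).length) :
    (ps.getD y []).take r = (qs.getD y []).take r := by
  rcases Nat.eq_zero_or_pos r with hr0 | hr0
  · simp [hr0]
  · have hrle : r ≤ (ps.getD y []).length := le_of_lt hrlt
    have hL1 : (lcp s t).take (lcp s t).length = s.take (lcp s t).length :=
      prefix_take_eq (lcp_prefix s t).1 le_rfl
    have hL2 : (lcp s t).take (lcp s t).length = t.take (lcp s t).length :=
      prefix_take_eq (lcp_prefix s t).2 le_rfl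
    have hst : s.take ((ps.take y).flatten.length + r)
        = t.take ((ps.take y).flatten.length + r) := by
      rw [← hr, ← hL1, ← hL2]
    exact greedy_core D hpc y s t ps qs hs ht r hy1 hy2 hr0 hrle hst
end

section
/- If strings s_0, ..., s_{m-1} are each terminated by a unique separator symbol #_i not occurring elsewhere, then in the LZ78 parsing of the concatenation S = s_0 s_1 ... s_{m-1}, every phrase containing a separator symbol ends exactly at that separator; consequently each string boundary coincides with a phrase boundary. -/
/-- LZ78 parsing: `LZ78 s D ps D'` means that parsing the input `s` starting
with phrase dictionary `D` produces the list of phrases `ps` and final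
dictionary `D'`. -/
inductive LZ78 {α : Type*} : List α → Set (List α) → List (List α) → Set (List α) → Prop
  | nil (D : Set (List α)) : LZ78 [] D [] D
  | last {s : List α} {D : Set (List α)} :
      s ≠ [] → IsLongestPrefIn D s s → LZ78 s D [s] D
  | step {s : List α} {D : Set (List α)} {p : List α} {a : α} {ps : List (List α)}
      {D' : Set (List α)} :
      IsLongestPrefIn D s p → s[p.length]? = some a →
      LZ78 (s.drop (p.length + 1)) (insert (p ++ [a]) D) ps D' →
      LZ78 s D ((p ++ [a]) :: ps) D'

/-!
A phrase is a dictionary word followed by one symbol. As long as the separator `c` has not been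
read, no dictionary word contains it, since every dictionary word was read before. Once a phrase
`p ++ [c]` has been formed, `c` never occurs again in the remaining input, so the new words
containing `c` can never be prefixes of it. Hence `c` can only be the last symbol of a phrase.
Since `c` occurs once in `S`, there is only one prefix of `S` ending in `c`: the prefix formed by
the phrases up to the one containing `c` is the prefix `s_0 ⋯ s_i`.
-/

namespace List

variable {α : Type*}

theorem IsPrefix.eq_append_cons_drop {p s : List α} {a : α} (h : p <+: s)
    (ha : s[p.length]? = some a) : s = p ++ a :: s.drop (p.length + 1) := by
  obtain ⟨hlt, rfl⟩ := getElem?_eq_some_iff.mp ha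
  calc s = s.take p.length ++ s.drop p.length := (take_append_drop _ _).symm
    _ = _ := by rw [drop_eq_getElem_cons hlt, ← prefix_iff_eq_take.mp h]

theorem not_mem_of_count_append_cons_le_one [DecidableEq α] {p r : List α} {c : α}
    (h : (p ++ c :: r).count c ≤ 1) : c ∉ r := by
  rw [count_append, count_cons_self] at h
  exact count_eq_zero.mp (by omega)

theorem exists_flatten_take_eq_append_singleton {ps : List (List α)} {c : α}
    (hc : c ∈ ps.flatten) (hend : ∀ p ∈ ps, c ∈ p → ∃ q, p = q ++ [c]) :
    ∃ k q, (ps.take k).flatten = q ++ [c] := by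
  induction ps with
  | nil => simp at hc
  | cons p ps ih =>
    by_cases hcp : c ∈ p
    · obtain ⟨q, hq⟩ := hend p mem_cons_self hcp
      exact ⟨1, q, by simpa using hq⟩
    · have hc' : c ∈ ps.flatten := by simpa [hcp] using hc
      obtain ⟨k, q, hq⟩ := ih hc' fun p' hp' => hend p' (mem_cons_of_mem p hp')
      exact ⟨k + 1, p ++ q, by simp [hq]⟩

theorem IsPrefix.eq_of_count_le_one [DecidableEq α] {P T S : List α} {c : α}
    (hPT : P <+: T) (hTS : T <+: S) (hS : S.count c ≤ 1)
    (hP : ∃ q, P = q ++ [c]) (hT : ∃ q, T = q ++ [c]) : P = T := by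
  obtain ⟨r, rfl⟩ := hPT
  obtain ⟨q, rfl⟩ := hP
  obtain ⟨q', hq'⟩ := hT
  suffices r = [] by simp [this]
  by_contra hr
  have hcr : c ∈ r := by
    have hlast := congrArg getLast? hq'
    rw [getLast?_append_of_ne_nil _ hr, getLast?_concat] at hlast
    exact mem_of_getLast? hlast
  have := hTS.sublist.count_le c
  simp only [count_append, count_singleton_self] at this
  have := count_pos_iff.mpr hcr
  omega

theorem eq_of_isPrefix_of_count_le_one [DecidableEq α] {P T S : List α} {c : α}
    (hP : P <+: S) (hT : T <+: S) (hS : S.count c ≤ 1)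
    (hPc : ∃ q, P = q ++ [c]) (hTc : ∃ q, T = q ++ [c]) : P = T := by
  rcases prefix_or_prefix_of_prefix hP hT with hPT | hTP
  · exact hPT.eq_of_count_le_one hT hS hPc hTc
  · exact (hTP.eq_of_count_le_one hP hS hTc hPc).symm

theorem exists_flatten_take_eq_of_isPrefix [DecidableEq α] {ps : List (List α)} {T : List α}
    {c : α} (hS : ps.flatten.count c ≤ 1) (hend : ∀ p ∈ ps, c ∈ p → ∃ q, p = q ++ [c])
    (hT : T <+: ps.flatten) (hTc : ∃ q, T = q ++ [c]) : ∃ k, (ps.take k).flatten = T := by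
  have hc : c ∈ ps.flatten := by
    obtain ⟨q, rfl⟩ := hTc
    exact hT.subset (mem_append_right q (mem_singleton_self c))
  obtain ⟨k, q, hk⟩ := exists_flatten_take_eq_append_singleton hc hend
  exact ⟨k, eq_of_isPrefix_of_count_le_one ((take_prefix k ps).flatten) hT hS ⟨q, hk⟩ hTc⟩

end List

namespace LZ78

variable {α : Type*} {s : List α} {D D' : Set (List α)} {ps : List (List α)}

theorem flatten_eq (h : LZ78 s D ps D') : ps.flatten = s := by
  induction h with
  | nil => rfl
  | last => simp
  | step hp ha _ ih =>
    rw [List.flatten_cons, ih, List.append_assoc]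
    exact (hp.2.1.eq_append_cons_drop ha).symm

theorem eq_append_singleton_of_mem [DecidableEq α] {c : α} (h : LZ78 s D ps D')
    (hs : s.count c ≤ 1) (hD : ∀ d ∈ D, c ∈ d → c ∉ s) :
    ∀ p ∈ ps, c ∈ p → ∃ q, p = q ++ [c] := by
  induction h with
  | nil => simp
  | last _ hp =>
    intro p hmem hcp
    rw [List.mem_singleton.mp hmem] at hcp
    exact absurd hcp (hD _ hp.1 hcp)
  | @step s D p a ps D' hp ha _ ih =>
    have hsplit := hp.2.1.eq_append_cons_drop ha
    have hcp : c ∉ p := fun hcp => hD p hp.1 hcp (hp.2.1.subset hcp)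
    have hca : c ∈ p ++ [a] → c = a := by simp [hcp]
    have hrest : ∀ d ∈ insert (p ++ [a]) D, c ∈ d → c ∉ s.drop (p.length + 1) := by
      rintro d (rfl | hd) hcd
      · obtain rfl := hca hcd
        rw [hsplit] at hs
        exact List.not_mem_of_count_append_cons_le_one hs
      · exact fun hc => hD d hd hcd (List.mem_of_mem_drop hc)
    intro p' hp' hcp'
    rcases List.mem_cons.mp hp' with rfl | hp'
    · exact ⟨p, by rw [hca hcp']⟩
    · exact ih ((List.drop_sublist _ _).count_le c |>.trans hs) hrest p' hp' hcp'

end LZ78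

theorem lz78_separators_end_phrases_general {α : Type*} [DecidableEq α]
    (m : ℕ) (str : ℕ → List α) (sep : ℕ → α)
    (hlast : ∀ i < m, (str i).getLast? = some (sep i))
    (S : List α) (hS : S = ((List.range m).map str).flatten)
    (honce : ∀ i < m, S.count (sep i) = 1)
    (ps : List (List α)) (D' : Set (List α))
    (h : LZ78 S {([] : List α)} ps D') :
    (∀ p ∈ ps, ∀ i < m, sep i ∈ p → ∃ q : List α, p = q ++ [sep i]) ∧
      (∀ i ≤ m, ∃ k : ℕ, (ps.take k).flatten = (((List.range m).map str).take i).flatten) := by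
  have hends : ∀ i < m, ∀ p ∈ ps, sep i ∈ p → ∃ q : List α, p = q ++ [sep i] := fun i hi =>
    h.eq_append_singleton_of_mem (honce i hi).le (by simp)
  refine ⟨fun p hp i hi => hends i hi p hp, ?_⟩
  rintro (_ | i) hi
  · exact ⟨0, rfl⟩
  · have hflat := h.flatten_eq
    obtain ⟨q, hq⟩ := List.getLast?_eq_some_iff.mp (hlast i hi)
    refine List.exists_flatten_take_eq_of_isPrefix (c := sep i) (hflat ▸ (honce i hi).le)
      (hends i hi) (hflat ▸ hS ▸ (List.take_prefix _ _).flatten)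
      ⟨(((List.range m).map str).take i).flatten ++ q, ?_⟩
    rw [List.take_add_one, List.flatten_append, List.getElem?_map, List.getElem?_range hi]
    simp [hq]

/-- If the strings `str 0, ..., str (m-1)` are each terminated by a unique
separator symbol `sep i` occurring nowhere else in the concatenation
`S = str 0 ++ ... ++ str (m-1)`, then in the LZ78 parsing of `S` every phrase
containing a separator symbol ends exactly at that separator, and consequently
every string boundary coincides with a phrase boundary. -/
theorem lz78_separators_end_phrases {α : Type*} [DecidableEq α]
    (m : ℕ) (str : ℕ → List α) (sep : ℕ → α)
    (hne : ∀ i < m, str i ≠ [])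
    (hlast : ∀ i < m, (str i).getLast? = some (sep i))
    (hsep_inj : ∀ i < m, ∀ j < m, sep i = sep j → i = j)
    (S : List α) (hS : S = ((List.range m).map str).flatten)
    (honce : ∀ i < m, S.count (sep i) = 1)
    (ps : List (List α)) (D' : Set (List α))
    (h : LZ78 S {([] : List α)} ps D') :
    (∀ p ∈ ps, ∀ i < m, sep i ∈ p → ∃ q : List α, p = q ++ [sep i]) ∧
      (∀ i ≤ m, ∃ k : ℕ, (ps.take k).flatten = (((List.range m).map str).take i).flatten) :=
  lz78_separators_end_phrases_general m str sep hlast S hS honce ps D' h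
end
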